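/- Assume R is free as a 𝕜-module and let e be a twist on the finite G-set X. Choose a set Π of representatives of the G-orbits on X×X, and for each π = (x_π, y_π) ∈ Π let Stab_G(π) ≤ G be its stabilizer and let B^π be a 𝕜-basis of the invariant subring R^{Stab_G(π)} = {r ∈ R : h(r) = r for all h ∈ Stab_G(π)}. For π ∈ Π and r ∈ R^{Stab_G(π)}, define ξ_{π,r} ∈ R_G(X×X) by ξ_{π,r}(x,y) = Σ_{g ∈ G/Stab_G(π)} δ_{g·π,(x,y)}·e(x)·g(r) (the summand depends only on the coset of g). Then the collection {ξ_{π,r} : π ∈ Π, r ∈ B^π} is a 𝕜-basis of R_G(X×X). -/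

import Mathlib

/-!
The characteristic-type functions `ξ_{π,r}` form a 𝕜-basis of the module of
`G`-equivariant `R`-valued functions on `X × X`.
-/

open Finset

/-- A `G`-equivariant function on a `G`-set. -/
def Equivariant1 (G : Type*) {X R : Type*} [SMul G X] [SMul G R] (e : X → R) : Prop :=
  ∀ (g : G) (x : X), e (g • x) = g • e x

/-- A `G`-equivariant function of two arguments (diagonal action on `X × X`). -/
def Equivariant2 (G : Type*) {X R : Type*} [SMul G X] [SMul G R] (f : X → X → R) : Prop :=
  ∀ (g : G) (x y : X), f (g • x) (g • y) = g • f x y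

variable (k : Type*) (G : Type*) {R X : Type*}

/-- The `𝕜`-submodule of `H`-invariants `R^H` of `R`, for a subgroup `H ≤ G`. -/
def invariants [Field k] [Group G] [Ring R] [Algebra k R]
    [MulSemiringAction G R] [SMulCommClass G k R] (H : Subgroup G) : Submodule k R where
  carrier := {r : R | ∀ h : G, h ∈ H → h • r = r}
  add_mem' := by
    intro a b ha hb h hh
    rw [smul_add, ha h hh, hb h hh]
  zero_mem' := by
    intro h hh
    exact smul_zero h
  smul_mem' := by
    intro c r hr h hh
    rw [smul_comm, hr h hh]

/-- The `𝕜`-submodule `R_G(X×X)` of `G`-equivariant functions `X → X → R`. -/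
def equivSubmodule [Field k] [Group G] [Ring R] [Algebra k R]
    [MulSemiringAction G R] [SMulCommClass G k R] [MulAction G X] :
    Submodule k (X → X → R) where
  carrier := {f : X → X → R | Equivariant2 G f}
  add_mem' := by
    intro f f' hf hf' g x y
    show f (g • x) (g • y) + f' (g • x) (g • y) = g • (f x y + f' x y)
    rw [hf g x y, hf' g x y, smul_add]
  zero_mem' := by
    intro g x y
    exact (smul_zero g).symm
  smul_mem' := by
    intro c f hf g x y
    show c • f (g • x) (g • y) = g • (c • f x y)
    rw [hf g x y]
    exact (smul_comm g c (f x y)).symm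

/-!
Untwisting by `e` and evaluating at the representatives is a `𝕜`-linear map
`Φ f = (π ↦ e(π₁)⁻¹ f(π))` from `R^{X × X}` to `R^Π`. It is injective on equivariant functions,
which are determined by their values on one point of each orbit, and maps them into
`∏_π R^{Stab_G(π)}`. As `ξ_{π,r}` vanishes off the orbit of `π` and equals `e(π₁) r` at `π`,
`Φ` sends it to the function supported at `π` with value `r`. So the images of the `ξ_{π,b}`,
`b ∈ B^π`, form the product basis of `∏_π R^{Stab_G(π)}`, and a basis of the image pulls back
along the injective `Φ`.
-/

theorem Submodule.span_range_eq_of_injOn {A M N ι : Type*} [Semiring A] [AddCommMonoid M]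
    [AddCommMonoid N] [Module A M] [Module A N] (f : M →ₗ[A] N) {W : Submodule A M}
    {v : ι → M} (hv : ∀ i, v i ∈ W) (hf : Set.InjOn f W)
    (hW : W.map f ≤ span A (Set.range (f ∘ v))) :
    span A (Set.range v) = W := by
  have hspan_le : span A (Set.range v) ≤ W := span_le.mpr (Set.range_subset_iff.mpr hv)
  refine le_antisymm hspan_le fun w hw => ?_
  rw [Set.range_comp, ← map_span] at hW
  obtain ⟨w', hw', hfw'⟩ := hW (mem_map_of_mem hw)
  rwa [← hf (hspan_le hw') hw hfw']

theorem Pi.span_range_single_sigma {A η : Type*} {ιs : η → Type*} {Ms : η → Type*} [Semiring A]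
    [∀ j, AddCommMonoid (Ms j)] [∀ j, Module A (Ms j)] [DecidableEq η] [Finite η]
    (v : ∀ j, ιs j → Ms j) :
    Submodule.span A (Set.range fun ji : Σ j, ιs j ↦ Pi.single ji.1 (v ji.1 ji.2)) =
      Submodule.pi Set.univ fun j => Submodule.span A (Set.range (v j)) := by
  rw [Set.range_sigma_eq_iUnion_range, Submodule.span_iUnion, ← Submodule.iSup_map_single]
  congr! 2 with j
  rw [Submodule.map_span, ← Set.range_comp]
  rfl

section

variable {k G} [Field k] [Ring R] [Algebra k R]

variable (k) in
noncomputable def untwistedRestrict (e : X → R) (Reps : Set (X × X)) :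
    (X → X → R) →ₗ[k] (Reps → R) where
  toFun f π := Ring.inverse (e (π : X × X).1) * f (π : X × X).1 (π : X × X).2
  map_add' f f' := by ext; simp [mul_add]
  map_smul' c f := by ext; simp

variable {e : X → R} {Reps : Set (X × X)}

theorem untwistedRestrict_apply (f : X → X → R) (π : Reps) :
    untwistedRestrict k e Reps f π =
      Ring.inverse (e (π : X × X).1) * f (π : X × X).1 (π : X × X).2 :=
  rfl

variable [Group G] [MulAction G X]

theorem untwistedRestrict_eq_single [DecidableEq Reps] {π : X × X} (hπ : π ∈ Reps)
    (hdist : ∀ π ∈ Reps, ∀ π' ∈ Reps, π' ∈ MulAction.orbit G π → π = π')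
    (hu : IsUnit (e π.1)) {b : R} {F : X → X → R} (hF : F π.1 π.2 = e π.1 * b)
    (hoff : ∀ x y, (x, y) ∉ MulAction.orbit G π → F x y = 0) :
    untwistedRestrict k e Reps F = Pi.single ⟨π, hπ⟩ b := by
  ext ⟨π', hπ'⟩
  by_cases h : π' = π
  · subst h
    rw [untwistedRestrict_apply, hF, Ring.inverse_mul_cancel_left _ _ hu, Pi.single_eq_same]
  · rw [untwistedRestrict_apply, Pi.single_eq_of_ne (by simpa using h),
      hoff _ _ fun hc => h (hdist π hπ π' hπ' hc).symm, mul_zero]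

variable [MulSemiringAction G R]

theorem Equivariant2.eq_zero_of_forall_rep {f : X → X → R} (hf : Equivariant2 G f)
    (hrep : ∀ p : X × X, ∃ π ∈ Reps, p ∈ MulAction.orbit G π)
    (hzero : ∀ π ∈ Reps, f π.1 π.2 = 0) : f = 0 := by
  ext x y
  obtain ⟨π, hπ, g, hg⟩ := hrep (x, y)
  change f (x, y).1 (x, y).2 = 0
  rw [← hg, Prod.smul_fst, Prod.smul_snd, hf, hzero π hπ, smul_zero]

variable [SMulCommClass G k R]

theorem mem_invariants_of_isUnit_mul {H : Subgroup G} {a c : R} (ha : IsUnit a)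
    (ha_mem : a ∈ invariants k G H) (hac : a * c ∈ invariants k G H) :
    c ∈ invariants k G H := fun h hh =>
  ha.mul_left_cancel <| by rw [← ha_mem h hh, ← smul_mul', hac h hh, ha_mem h hh]

theorem Equivariant1.apply_fst_mem_invariants (he : Equivariant1 G e) (p : X × X) :
    e p.1 ∈ invariants k G (MulAction.stabilizer G p) := fun h hh => by
  rw [← he, ← Prod.smul_fst, MulAction.mem_stabilizer_iff.mp hh]

theorem Equivariant2.apply_mem_invariants {f : X → X → R} (hf : Equivariant2 G f) (p : X × X) :
    f p.1 p.2 ∈ invariants k G (MulAction.stabilizer G p) := fun h hh => by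
  rw [← hf, ← Prod.smul_fst, ← Prod.smul_snd, MulAction.mem_stabilizer_iff.mp hh]

theorem mem_equivSubmodule_of_eq_on_orbit (he : Equivariant1 G e) {π : X × X}
    {r : R} {F : X → X → R} (hF : ∀ g : G, F (g • π.1) (g • π.2) = e (g • π.1) * (g • r))
    (hoff : ∀ x y, (x, y) ∉ MulAction.orbit G π → F x y = 0) :
    F ∈ equivSubmodule k G := by
  intro h x y
  by_cases hxy : (x, y) ∈ MulAction.orbit G π
  · obtain ⟨g, hg⟩ := hxy
    change F (h • (x, y).1) (h • (x, y).2) = h • F (x, y).1 (x, y).2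
    rw [← hg, Prod.smul_fst, Prod.smul_snd, ← mul_smul, ← mul_smul, hF, hF, mul_smul, mul_smul,
      he h, smul_mul']
  · have hhxy : h • (x, y) ∉ MulAction.orbit G π := fun hc => hxy <| MulAction.orbit_eq_iff.mp <|
      (MulAction.orbit_smul h (x, y)).symm.trans (MulAction.orbit_eq_iff.mpr hc)
    rw [hoff x y hxy, hoff _ _ hhxy, smul_zero]

theorem injOn_untwistedRestrict (hu : ∀ x, IsUnit (e x))
    (hrep : ∀ p : X × X, ∃ π ∈ Reps, p ∈ MulAction.orbit G π) :
    Set.InjOn (untwistedRestrict k e Reps) ↑(equivSubmodule k G : Submodule k (X → X → R)) := by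
  rw [← LinearMap.disjoint_ker_iff_injOn, LinearMap.disjoint_ker]
  refine fun f hf hΦf => Equivariant2.eq_zero_of_forall_rep hf hrep fun π hπ => ?_
  have hπ0 := congrFun hΦf ⟨π, hπ⟩
  rwa [untwistedRestrict_apply, Pi.zero_apply, Ring.inverse_mul_eq_iff_eq_mul _ _ _ (hu _),
    mul_zero] at hπ0

theorem map_untwistedRestrict_le_pi_invariants (he : Equivariant1 G e) (hu : ∀ x, IsUnit (e x)) :
    (equivSubmodule k G).map (untwistedRestrict k e Reps) ≤
      Submodule.pi Set.univ fun π : Reps =>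
        invariants k G (MulAction.stabilizer G (π : X × X)) := by
  rintro _ ⟨f, hf, rfl⟩ π -
  refine mem_invariants_of_isUnit_mul (hu _) (he.apply_fst_mem_invariants π) ?_
  rw [untwistedRestrict_apply, Ring.mul_inverse_cancel_left _ _ (hu _)]
  exact Equivariant2.apply_mem_invariants hf π

end

theorem stmt1 [Field k] [Group G] [Ring R] [Algebra k R]
    [MulSemiringAction G R] [SMulCommClass G k R]
    [Fintype X] [MulAction G X]
    (e : X → R) (heq : Equivariant1 G e) (hu : ∀ x, IsUnit (e x))
    -- `Π` is a set of representatives of the `G`-orbits on `X × X`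
    (Reps : Set (X × X))
    (hrep : ∀ p : X × X, ∃ π ∈ Reps, p ∈ MulAction.orbit G π)
    (hdist : ∀ π ∈ Reps, ∀ π' ∈ Reps, π' ∈ MulAction.orbit G π → π = π')
    -- for each `π`, a `𝕜`-basis `Bb π` of the invariant subring `R^{Stab_G(π)}`
    (ι : (X × X) → Type*) (Bb : ∀ π : X × X, ι π → R)
    (hBinv : ∀ π ∈ Reps, ∀ i : ι π, Bb π i ∈ invariants k G (MulAction.stabilizer G π))
    (hBli : ∀ π ∈ Reps, LinearIndependent k (Bb π))
    (hBspan : ∀ π ∈ Reps, Submodule.span k (Set.range (Bb π)) =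
        invariants k G (MulAction.stabilizer G π))
    -- the functions `ξ_{π,r}`, characterized by their values:
    -- `ξ_{π,r}(g•π) = e(g•π₁)·g(r)` on the orbit of `π` and `0` elsewhere
    (ξ : (X × X) → R → (X → X → R))
    (hξ_orbit : ∀ π ∈ Reps, ∀ r : R, r ∈ invariants k G (MulAction.stabilizer G π) →
        ∀ g : G, ξ π r (g • π.1) (g • π.2) = e (g • π.1) * (g • r))
    (hξ_off : ∀ π ∈ Reps, ∀ (r : R) (x y : X),
        (x, y) ∉ MulAction.orbit G π → ξ π r x y = 0) :
    -- conclusion: `{ξ_{π,r} : π ∈ Π, r ∈ B^π}` is a `𝕜`-basis of `R_G(X×X)`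
    LinearIndependent k
      (fun q : (Σ π : Reps, ι (π : X × X)) => ξ (q.1 : X × X) (Bb (q.1 : X × X) q.2)) ∧
    Submodule.span k
      (Set.range fun q : (Σ π : Reps, ι (π : X × X)) => ξ (q.1 : X × X) (Bb (q.1 : X × X) q.2)) =
      equivSubmodule k G := by
  classical
  have hΦξ : untwistedRestrict k e Reps ∘
      (fun q : Σ π : Reps, ι (π : X × X) => ξ (q.1 : X × X) (Bb (q.1 : X × X) q.2)) =
      fun q => Pi.single q.1 (Bb (q.1 : X × X) q.2) := by
    funext ⟨⟨π, hπ⟩, i⟩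
    have hbase := hξ_orbit π hπ _ (hBinv π hπ i) 1
    simp only [one_smul] at hbase
    exact untwistedRestrict_eq_single hπ hdist (hu π.1) hbase (hξ_off π hπ _)
  refine ⟨.of_comp (untwistedRestrict k e Reps) ?_,
    Submodule.span_range_eq_of_injOn _ (fun q => ?_) (injOn_untwistedRestrict hu hrep) ?_⟩
  · rw [hΦξ]
    exact Pi.linearIndependent_single (Ms := fun _ => R) (fun π : Reps => Bb π)
      fun π => hBli π π.2
  · exact mem_equivSubmodule_of_eq_on_orbit heq (hξ_orbit q.1 q.1.2 _ (hBinv q.1 q.1.2 q.2))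
      (hξ_off q.1 q.1.2 _)
  · rw [hΦξ, Pi.span_range_single_sigma (Ms := fun _ => R) (fun π : Reps => Bb π)]
    simp_rw [hBspan _ (Subtype.prop _)]
    exact map_untwistedRestrict_le_pi_invariants heq hu
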